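/- arXiv:2103.10834 — 7 statements merged into one kernel-verified Lean document; each statement's English description precedes it below -/
import Mathlib

section
/- Let x, x' ∈ ℝ^d, λ > 0, and let B(x), B(x') be ℓ∞ balls of radius λ around x and x'. If Z is uniform on B(x), then P(Z ∉ B(x')) ≤ ‖x - x'‖₁ / (2λ). -/
open MeasureTheory Set

lemma icc_diff_vol_le (lam a b : ℝ) :
    volume (Icc (a - lam) (a + lam) \ Icc (b - lam) (b + lam)) ≤ ENNReal.ofReal |a - b| := by
  have hsub : Icc (a - lam) (a + lam) \ Icc (b - lam) (b + lam) ⊆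
      Ico (a - lam) (b - lam) ∪ Ioc (b + lam) (a + lam) := by
    rintro z ⟨hz, hz'⟩
    simp only [mem_Icc, not_and_or, not_le] at hz hz'
    rcases hz' with h | h
    · exact Or.inl ⟨hz.1, h⟩
    · exact Or.inr ⟨h, hz.2⟩
  calc volume (Icc (a - lam) (a + lam) \ Icc (b - lam) (b + lam))
      ≤ volume (Ico (a - lam) (b - lam) ∪ Ioc (b + lam) (a + lam)) := measure_mono hsub
    _ ≤ volume (Ico (a - lam) (b - lam)) + volume (Ioc (b + lam) (a + lam)) :=
        measure_union_le _ _
    _ ≤ ENNReal.ofReal |a - b| := by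
        rw [Real.volume_Ico, Real.volume_Ioc]
        rcases le_total a b with h | h
        · have h1 : (b - lam) - (a - lam) = b - a := by ring
          have h2 : (a + lam) - (b + lam) = a - b := by ring
          rw [h1, h2, ENNReal.ofReal_eq_zero.2 (show a - b ≤ 0 by linarith), add_zero,
            abs_of_nonpos (show a - b ≤ 0 by linarith), neg_sub]
        · have h1 : (b - lam) - (a - lam) = b - a := by ring
          have h2 : (a + lam) - (b + lam) = a - b := by ring
          rw [h1, h2, ENNReal.ofReal_eq_zero.2 (show b - a ≤ 0 by linarith), zero_add,
            abs_of_nonneg (show 0 ≤ a - b by linarith)]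

/-- If `Z` is uniform on the ℓ∞ ball of radius `λ` around `x`, the probability that `Z` lies
outside the ℓ∞ ball of radius `λ` around `x'` is at most `‖x - x'‖₁ / (2λ)`. -/
theorem prob_escape_linf_ball (d : ℕ) (lam : ℝ) (hlam : 0 < lam) (x x' : Fin d → ℝ) :
    ((volume {z : Fin d → ℝ | ∀ i, |z i - x i| ≤ lam})⁻¹ •
        volume.restrict {z : Fin d → ℝ | ∀ i, |z i - x i| ≤ lam})
      {z : Fin d → ℝ | ¬ ∀ i, |z i - x' i| ≤ lam} ≤
      ENNReal.ofReal ((∑ i, |x i - x' i|) / (2 * lam)) := by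
  set t : ENNReal := ENNReal.ofReal (2 * lam) with ht
  have ht0 : t ≠ 0 := by simp [ht, ENNReal.ofReal_eq_zero]; linarith
  have httop : t ≠ ⊤ := ENNReal.ofReal_ne_top
  set S : ℝ := ∑ i, |x i - x' i| with hSdef
  have hAeq : {z : Fin d → ℝ | ∀ i, |z i - x i| ≤ lam} =
      Set.pi univ (fun i => Icc (x i - lam) (x i + lam)) := by
    ext z
    simp only [mem_setOf_eq, Set.mem_pi, mem_univ, forall_true_left, mem_Icc, abs_sub_le_iff]
    refine forall_congr' fun i => ?_
    constructor <;> intro h <;> exact ⟨by linarith [h.1, h.2], by linarith [h.1, h.2]⟩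
  have hvolA : volume {z : Fin d → ℝ | ∀ i, |z i - x i| ≤ lam} = t ^ d := by
    rw [hAeq, volume_pi_pi]
    have : ∀ i : Fin d, volume (Icc (x i - lam) (x i + lam)) = t := by
      intro i
      rw [Real.volume_Icc, ht]
      congr 1
      ring
    simp [this]
  have hSmeas : MeasurableSet {z : Fin d → ℝ | ¬ ∀ i, |z i - x' i| ≤ lam} := by
    have : {z : Fin d → ℝ | ∀ i, |z i - x' i| ≤ lam} =
        Set.pi univ (fun i => Icc (x' i - lam) (x' i + lam)) := by
      ext z
      simp only [mem_setOf_eq, Set.mem_pi, mem_univ, forall_true_left, mem_Icc, abs_sub_le_iff]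
      refine forall_congr' fun i => ?_
      constructor <;> intro h <;> exact ⟨by linarith [h.1, h.2], by linarith [h.1, h.2]⟩
    have hm : MeasurableSet {z : Fin d → ℝ | ∀ i, |z i - x' i| ≤ lam} := by
      rw [this]
      exact MeasurableSet.univ_pi fun i => measurableSet_Icc
    exact hm.compl
  rw [Measure.smul_apply, smul_eq_mul, Measure.restrict_apply hSmeas, hvolA]
  -- bound the measure of the intersection
  have hkey : volume ({z : Fin d → ℝ | ¬ ∀ i, |z i - x' i| ≤ lam} ∩
      {z : Fin d → ℝ | ∀ i, |z i - x i| ≤ lam}) ≤ ENNReal.ofReal S * t ^ (d - 1) := by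
    have hUnion : {z : Fin d → ℝ | ¬ ∀ i, |z i - x' i| ≤ lam} =
        ⋃ i, {z : Fin d → ℝ | lam < |z i - x' i|} := by
      ext z
      simp only [mem_setOf_eq, mem_iUnion, not_forall, not_le]
    rw [hUnion, iUnion_inter]
    refine le_trans (measure_iUnion_le _) ?_
    rw [tsum_fintype]
    have hterm : ∀ i : Fin d,
        volume ({z : Fin d → ℝ | lam < |z i - x' i|} ∩
          {z : Fin d → ℝ | ∀ j, |z j - x j| ≤ lam}) ≤
        ENNReal.ofReal |x i - x' i| * t ^ (d - 1) := by
      intro i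
      set T : Fin d → Set ℝ := fun j =>
        if j = i then Icc (x i - lam) (x i + lam) \ Icc (x' i - lam) (x' i + lam)
        else Icc (x j - lam) (x j + lam) with hT
      have hsub : {z : Fin d → ℝ | lam < |z i - x' i|} ∩
          {z : Fin d → ℝ | ∀ j, |z j - x j| ≤ lam} ⊆ Set.pi univ T := by
        rintro z ⟨hz1, hz2⟩ j _
        simp only [hT]
        by_cases hj : j = i
        · subst hj
          simp only [if_pos rfl, mem_diff, mem_Icc]
          have h1 := hz2 j
          rw [abs_sub_le_iff] at h1
          have h2 : lam < |z j - x' j| := hz1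
          constructor
          · exact ⟨by linarith [h1.1, h1.2], by linarith [h1.1, h1.2]⟩
          · rw [mem_Icc]
            rcases lt_abs.1 h2 with h | h
            · intro hc; linarith [hc.2]
            · intro hc; linarith [hc.1]
        · simp only [if_neg hj, mem_Icc]
          have := hz2 j
          rw [abs_sub_le_iff] at this
          exact ⟨by linarith [this.1, this.2], by linarith [this.1, this.2]⟩
      refine le_trans (measure_mono hsub) ?_
      rw [volume_pi_pi]
      have hi : volume (T i) ≤ ENNReal.ofReal |x i - x' i| := by
        simp only [hT, if_pos rfl]
        exact icc_diff_vol_le lam (x i) (x' i)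
      have hrest : ∏ j ∈ Finset.univ.erase i, volume (T j) = t ^ (d - 1) := by
        rw [Finset.prod_congr rfl (fun j hj => ?_), Finset.prod_const,
          Finset.card_erase_of_mem (Finset.mem_univ i), Finset.card_univ, Fintype.card_fin]
        have hj' : j ≠ i := Finset.ne_of_mem_erase hj
        simp only [hT, if_neg hj', Real.volume_Icc, ht]
        congr 1
        ring
      calc ∏ j, volume (T j)
          = volume (T i) * ∏ j ∈ Finset.univ.erase i, volume (T j) :=
            (Finset.mul_prod_erase Finset.univ _ (Finset.mem_univ i)).symm
        _ ≤ ENNReal.ofReal |x i - x' i| * t ^ (d - 1) := by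
            rw [hrest]; exact mul_le_mul_left hi _
    refine le_trans (Finset.sum_le_sum fun i _ => hterm i) ?_
    rw [← Finset.sum_mul, hSdef, ENNReal.ofReal_sum_of_nonneg (fun i _ => abs_nonneg _)]
  refine le_trans (mul_le_mul_right hkey _) ?_
  rcases Nat.eq_zero_or_pos d with rfl | hd
  · simp [hSdef]
  · obtain ⟨n, rfl⟩ : ∃ n, d = n + 1 := ⟨d - 1, (Nat.succ_pred_eq_of_pos hd).symm⟩
    simp only [Nat.add_sub_cancel]
    have h2lam : (0:ℝ) < 2 * lam := by linarith
    rw [ENNReal.ofReal_div_of_pos h2lam, ← ht]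
    have htn0 : t ^ n ≠ 0 := pow_ne_zero _ ht0
    have htntop : t ^ n ≠ ⊤ := ENNReal.pow_ne_top httop
    rw [pow_succ, ENNReal.mul_inv (Or.inl htn0) (Or.inl htntop)]
    calc (t ^ n)⁻¹ * t⁻¹ * (ENNReal.ofReal S * t ^ n)
        = ENNReal.ofReal S * t⁻¹ * ((t ^ n)⁻¹ * t ^ n) := by ring
      _ = ENNReal.ofReal S * t⁻¹ := by rw [ENNReal.inv_mul_cancel htn0 htntop, mul_one]
      _ = ENNReal.ofReal S / t := (div_eq_mul_inv _ _).symm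
      _ ≤ ENNReal.ofReal S / t := le_rfl
end

section
/- Let x, x' ∈ [0,1]^d and let s ∈ [0,2λ]^d be a random vector with each coordinate sᵢ marginally uniform on [0,2λ] (λ ≥ 1/2), with arbitrary joint distribution. Define x̃ᵢ = (min(sᵢ,1) + 1_{xᵢ > sᵢ})/2 and similarly x̃'ᵢ. Then P(x̃ ≠ x̃') ≤ ‖x - x'‖₁ / (2λ). -/
open MeasureTheory Set

/-- Uniform probability measure on the interval `[a,b]`. -/
noncomputable def unif (a b : ℝ) : Measure ℝ :=
  (ENNReal.ofReal (b - a))⁻¹ • volume.restrict (Icc a b)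

/-- Union bound: with splitting noise whose coordinates are marginally uniform on `[0,2λ]`
(arbitrary joint distribution), the probability that the splitting representations of
`x` and `x'` differ is at most `‖x - x'‖₁ / (2λ)`. -/
theorem ssn_union_bound (d : ℕ) (lam : ℝ) (hlam : 1/2 ≤ lam)
    (μ : Measure (Fin d → ℝ)) [IsProbabilityMeasure μ]
    (hmarg : ∀ i, μ.map (fun s => s i) = unif 0 (2 * lam))
    (x x' : Fin d → ℝ) (hx : ∀ i, x i ∈ Icc (0:ℝ) 1) (hx' : ∀ i, x' i ∈ Icc (0:ℝ) 1) :
    μ {s : Fin d → ℝ |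
        (fun i => (min (s i) 1 + (if s i < x i then (1:ℝ) else 0)) / 2) ≠
        (fun i => (min (s i) 1 + (if s i < x' i then (1:ℝ) else 0)) / 2)} ≤
      ENNReal.ofReal ((∑ i, |x i - x' i|) / (2 * lam)) := by
  have hlam0 : (0:ℝ) < 2 * lam := by linarith
  set E : Fin d → Set (Fin d → ℝ) := fun i =>
    (fun s : Fin d → ℝ => s i) ⁻¹' Ico (min (x i) (x' i)) (max (x i) (x' i)) with hE
  have hsub : {s : Fin d → ℝ |
        (fun i => (min (s i) 1 + (if s i < x i then (1:ℝ) else 0)) / 2) ≠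
        (fun i => (min (s i) 1 + (if s i < x' i then (1:ℝ) else 0)) / 2)} ⊆ ⋃ i, E i := by
    intro s hs
    simp only [mem_setOf_eq] at hs
    rw [Function.ne_iff] at hs
    obtain ⟨i, hi⟩ := hs
    have hite : (if s i < x i then (1:ℝ) else 0) ≠ (if s i < x' i then (1:ℝ) else 0) := by
      intro h; exact hi (by rw [h])
    refine mem_iUnion.2 ⟨i, ?_⟩
    simp only [hE, mem_preimage, mem_Ico]
    by_cases h1 : s i < x i <;> by_cases h2 : s i < x' i <;> simp [h1, h2] at hite
    · exact ⟨le_trans (min_le_right _ _) (not_lt.1 h2), lt_of_lt_of_le h1 (le_max_left _ _)⟩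
    · exact ⟨le_trans (min_le_left _ _) (not_lt.1 h1), lt_of_lt_of_le h2 (le_max_right _ _)⟩
  have hEmeas : ∀ i, μ (E i) ≤ (ENNReal.ofReal (2 * lam))⁻¹ * ENNReal.ofReal |x i - x' i| := by
    intro i
    have hm : Measurable (fun s : Fin d → ℝ => s i) := measurable_pi_apply i
    have : μ (E i) = (μ.map (fun s => s i)) (Ico (min (x i) (x' i)) (max (x i) (x' i))) := by
      rw [Measure.map_apply hm measurableSet_Ico]
    rw [this, hmarg i]
    simp only [unif, Measure.smul_apply, smul_eq_mul, sub_zero]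
    gcongr
    · calc volume.restrict (Icc 0 (2 * lam)) (Ico (min (x i) (x' i)) (max (x i) (x' i)))
          ≤ volume (Ico (min (x i) (x' i)) (max (x i) (x' i))) :=
            Measure.restrict_apply_le _ _
      _ = ENNReal.ofReal (max (x i) (x' i) - min (x i) (x' i)) := by
            rw [Real.volume_Ico]
      _ = ENNReal.ofReal |x i - x' i| := by rw [max_sub_min_eq_abs, abs_sub_comm]
  calc μ _ ≤ μ (⋃ i, E i) := measure_mono hsub
    _ ≤ ∑' i, μ (E i) := measure_iUnion_le _
    _ = ∑ i, μ (E i) := tsum_fintype _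
    _ ≤ ∑ i, (ENNReal.ofReal (2 * lam))⁻¹ * ENNReal.ofReal |x i - x' i| :=
        Finset.sum_le_sum fun i _ => hEmeas i
    _ = (ENNReal.ofReal (2 * lam))⁻¹ * ∑ i, ENNReal.ofReal |x i - x' i| := by
        rw [Finset.mul_sum]
    _ = (ENNReal.ofReal (2 * lam))⁻¹ * ENNReal.ofReal (∑ i, |x i - x' i|) := by
        rw [ENNReal.ofReal_sum_of_nonneg (fun i _ => abs_nonneg _)]
    _ = ENNReal.ofReal ((∑ i, |x i - x' i|) / (2 * lam)) := by
        rw [ENNReal.ofReal_div_of_pos hlam0, div_eq_mul_inv, mul_comm]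
end

section
/- There exists a measurable function f : ℝ² → [0,1] and a joint distribution D on ℝ² whose two marginals are each uniform on [-1/2, 1/2], such that the function p(x) = E_{ε~D}[f(x+ε)] is not 1-Lipschitz with respect to the ℓ1 norm. Concretely, take f(z) = 1_{z₁ > 0.4 + z₂} and D the distribution of (ε₁, ε₁) with ε₁ uniform on [-1/2,1/2]; then for x = (0.8, 0.2) and x' = (0.6, 0.4) one has p(x) = 1, p(x') = 0, while ‖x - x'‖₁ = 0.4 < 1. -/
open MeasureTheory Set

lemma unif_eq : unif (-(1/2)) (1/2) = volume.restrict (Icc (-(1/2)) (1/2 : ℝ)) := by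
  unfold unif
  norm_num

lemma unif_prob : IsProbabilityMeasure (unif (-(1/2)) (1/2)) := by
  rw [unif_eq]
  constructor
  rw [Measure.restrict_apply_univ, Real.volume_Icc]
  norm_num

/-- Additive uniform noise with correlated coordinates can fail to be `1`-Lipschitz:
there is a `[0,1]`-valued base classifier `f` on `ℝ²` and a joint noise distribution `D`
with both marginals uniform on `[-1/2,1/2]` such that the smoothed function
`p(x) = E_{ε~D}[f(x+ε)]` is not `1`-Lipschitz w.r.t. the ℓ1 norm. -/
theorem additive_correlated_noise_not_lipschitz :
    ∃ (f : ℝ × ℝ → ℝ) (D : Measure (ℝ × ℝ)),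
      Measurable f ∧ (∀ z, f z ∈ Icc (0:ℝ) 1) ∧
      IsProbabilityMeasure D ∧
      D.map Prod.fst = unif (-(1/2)) (1/2) ∧
      D.map Prod.snd = unif (-(1/2)) (1/2) ∧
      ¬ (∀ x x' : ℝ × ℝ,
          |(∫ ε, f (x + ε) ∂D) - (∫ ε, f (x' + ε) ∂D)| ≤
            (|x.1 - x'.1| + |x.2 - x'.2|)) := by
  classical
  set μ := unif (-(1/2)) (1/2) with hμ
  have hμprob : IsProbabilityMeasure μ := unif_prob
  set s : Set (ℝ × ℝ) := {z | 0.4 + z.2 < z.1} with hs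
  have hsmeas : MeasurableSet s := by
    apply measurableSet_lt <;> measurability
  set f : ℝ × ℝ → ℝ := s.indicator (fun _ => 1) with hf
  have hfmeas : Measurable f := (measurable_const.indicator hsmeas)
  have hdiag : Measurable (fun t : ℝ => (t, t)) := measurable_id.prodMk measurable_id
  set D : Measure (ℝ × ℝ) := μ.map (fun t => (t, t)) with hD
  have hDprob : IsProbabilityMeasure D := Measure.isProbabilityMeasure_map hdiag.aemeasurable
  refine ⟨f, D, hfmeas, ?_, hDprob, ?_, ?_, ?_⟩
  · intro z
    by_cases hz : z ∈ s <;> simp [hf, hz]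
  · rw [hD, Measure.map_map measurable_fst hdiag]
    have : (Prod.fst ∘ fun t : ℝ => (t, t)) = id := rfl
    rw [this, Measure.map_id]
  · rw [hD, Measure.map_map measurable_snd hdiag]
    have : (Prod.snd ∘ fun t : ℝ => (t, t)) = id := rfl
    rw [this, Measure.map_id]
  · intro h
    have key : ∀ x : ℝ × ℝ, (∫ ε, f (x + ε) ∂D) = if 0.4 + x.2 < x.1 then 1 else 0 := by
      intro x
      have haux : AEStronglyMeasurable (fun ε : ℝ × ℝ => f (x + ε))
          (μ.map (fun t => (t, t))) :=
        (hfmeas.comp (measurable_const_add x)).aestronglyMeasurable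
      rw [hD, integral_map hdiag.aemeasurable haux]
      have : ∀ t : ℝ, f (x + (t, t)) = if 0.4 + x.2 < x.1 then 1 else 0 := by
        intro t
        simp only [hf, Set.indicator, hs, Prod.fst_add, Prod.snd_add, mem_setOf_eq]
        by_cases hx : 0.4 + x.2 < x.1
        · rw [if_pos (by simpa using by linarith), if_pos hx]
        · rw [if_neg (by simp only [not_lt] at hx ⊢; linarith), if_neg hx]
      simp only [this]
      rw [integral_const]
      simp
    have h1 := h (0.8, 0.2) (0.6, 0.4)
    rw [key (0.8, 0.2), key (0.6, 0.4)] at h1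
    norm_num [abs_of_nonneg] at h1
end

section
/- Let λ > 0 and x, x' ∈ [0,1] with x ≤ x' and x' - x < 2λ. Let s be uniform on [0, 2λ]. Then P(⌈(x - s)/(2λ)⌉ ≠ ⌈(x' - s)/(2λ)⌉) = (x' - x)/(2λ). -/
open MeasureTheory Set

/-- General-case coordinate lemma: for `x ≤ x'` in `[0,1]` with `x' - x < 2λ` and `s`
uniform on `[0,2λ]`, the ceilings `⌈(x-s)/(2λ)⌉` and `⌈(x'-s)/(2λ)⌉` differ with
probability exactly `(x' - x)/(2λ)`. -/
theorem ceiling_disagreement_probability (lam : ℝ) (hlam : 0 < lam)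
    (x x' : ℝ) (hx : x ∈ Icc (0:ℝ) 1) (hx' : x' ∈ Icc (0:ℝ) 1)
    (hle : x ≤ x') (hlt : x' - x < 2 * lam) :
    unif 0 (2 * lam) {s : ℝ | ⌈(x - s) / (2 * lam)⌉ ≠ ⌈(x' - s) / (2 * lam)⌉} =
      ENNReal.ofReal ((x' - x) / (2 * lam)) := by
  set t : ℝ := 2 * lam with ht_def
  have ht : 0 < t := by positivity
  -- Step 1: set characterization
  have hset : {s : ℝ | ⌈(x - s) / t⌉ ≠ ⌈(x' - s) / t⌉}
      = ⋃ n : ℤ, Ico (x - t * n) (x' - t * n) := by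
    ext s
    simp only [mem_setOf_eq, mem_iUnion, mem_Ico]
    constructor
    · intro h
      have hmono : ⌈(x - s) / t⌉ ≤ ⌈(x' - s) / t⌉ :=
        Int.ceil_le_ceil (by apply div_le_div_of_nonneg_right (by linarith) ht.le)
      have hlt' : ⌈(x - s) / t⌉ < ⌈(x' - s) / t⌉ := lt_of_le_of_ne hmono h
      refine ⟨⌈(x - s) / t⌉, ?_, ?_⟩
      · have h1 : (x - s) / t ≤ (⌈(x - s) / t⌉ : ℝ) := Int.le_ceil _
        have h2 : x - s ≤ t * ⌈(x - s) / t⌉ := by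
          rw [div_le_iff₀ ht] at h1; linarith
        linarith
      · have h1 : ((⌈(x - s) / t⌉ : ℤ) : ℝ) < (x' - s) / t := Int.lt_ceil.mp hlt'
        rw [lt_div_iff₀ ht] at h1; linarith
    · rintro ⟨n, h1, h2⟩
      have hc1 : ⌈(x - s) / t⌉ ≤ n := Int.ceil_le.mpr (by rw [div_le_iff₀ ht]; linarith)
      have hc2 : n < ⌈(x' - s) / t⌉ := Int.lt_ceil.mpr (by rw [lt_div_iff₀ ht]; linarith)
      omega
  -- measurability
  have hmeas : MeasurableSet {s : ℝ | ⌈(x - s) / t⌉ ≠ ⌈(x' - s) / t⌉} := by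
    rw [hset]; exact MeasurableSet.iUnion fun n => measurableSet_Ico
  -- Step 2: unfold unif
  have hunif : unif 0 t {s : ℝ | ⌈(x - s) / t⌉ ≠ ⌈(x' - s) / t⌉}
      = (ENNReal.ofReal t)⁻¹ *
        volume ({s : ℝ | ⌈(x - s) / t⌉ ≠ ⌈(x' - s) / t⌉} ∩ Icc 0 t) := by
    rw [unif, Measure.smul_apply, Measure.restrict_apply hmeas, smul_eq_mul, sub_zero]
  -- Step 3: replace Icc by Ico a.e.
  have hae : volume ({s : ℝ | ⌈(x - s) / t⌉ ≠ ⌈(x' - s) / t⌉} ∩ Icc 0 t)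
      = volume ({s : ℝ | ⌈(x - s) / t⌉ ≠ ⌈(x' - s) / t⌉} ∩ Ico 0 t) :=
    (measure_congr ((Filter.EventuallyEq.refl _ _).inter Ico_ae_eq_Icc)).symm
  -- Step 4: compute the volume on Ico 0 t
  set n1 : ℤ := ⌈x' / t⌉ - 1 with hn1_def
  set b : ℝ := x' - t * n1 with hb_def
  set a : ℝ := x - t * n1 with ha_def
  have hba : b - a = x' - x := by simp only [hb_def, ha_def]; ring
  have hb_pos : 0 < b := by
    have : ((n1 : ℝ)) < x' / t := by
      have := Int.ceil_lt_add_one (x' / t)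
      push_cast [hn1_def]
      push_cast at this
      linarith
    rw [lt_div_iff₀ ht] at this
    simp only [hb_def]; linarith [this]
  have hb_le : b ≤ t := by
    have : x' / t ≤ ((n1 : ℝ) + 1) := by
      have := Int.le_ceil (x' / t)
      push_cast [hn1_def]
      push_cast at this
      linarith
    rw [div_le_iff₀ ht] at this
    simp only [hb_def]; nlinarith
  have ha_gt : -t < a := by
    have : a = b - (x' - x) := by linarith
    linarith
  -- key: membership in the union within Ico 0 t forces n = n1 or n = n1 - 1
  have hforce : ∀ (s : ℝ) (n : ℤ), 0 ≤ s → s < t → x - t * n ≤ s → s < x' - t * n →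
      n = n1 ∨ n = n1 - 1 := by
    intro s n hs0 hst h1 h2
    have hup : n ≤ n1 := by
      have hlt1 : (n : ℝ) < x' / t := by rw [lt_div_iff₀ ht]; nlinarith
      have := Int.lt_ceil.mpr hlt1
      omega
    have hdown : n1 - 1 ≤ n := by
      by_contra hc
      push_neg at hc
      have hc' : n ≤ n1 - 2 := by omega
      have hcast : (n : ℝ) ≤ (n1 : ℝ) - 2 := by exact_mod_cast hc' 
      have : t * n ≤ t * ((n1 : ℝ) - 2) := by nlinarith
      have hge : x - t * n ≥ a + 2 * t := by
        simp only [ha_def]; nlinarith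
      linarith
    omega
  by_cases hA : 0 ≤ a
  -- Case A: the single interval Ico a b sits inside [0, t)
  · have hseteq : (⋃ n : ℤ, Ico (x - t * n) (x' - t * n)) ∩ Ico 0 t = Ico a b := by
      ext s
      simp only [mem_inter_iff, mem_iUnion, mem_Ico]
      constructor
      · rintro ⟨⟨n, h1, h2⟩, hs0, hst⟩
        have hn : n = n1 ∨ n = n1 - 1 := hforce s n hs0 hst h1 h2
        rcases hn with hn | hn
        · subst hn; exact ⟨by simpa [ha_def] using h1, by simpa [hb_def] using h2⟩
        · exfalso
          subst hn
          have hcast : ((n1 : ℝ) - 1) = ((n1 - 1 : ℤ) : ℝ) := by push_cast; ring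
          have h1' : x - t * ((n1 : ℝ) - 1) ≤ s := by rw [hcast]; exact_mod_cast h1
          have : a + t ≤ s := by simp only [ha_def]; nlinarith
          linarith
      · rintro ⟨hsa, hsb⟩
        exact ⟨⟨n1, by simpa [ha_def] using hsa, by simpa [hb_def] using hsb⟩,
          le_trans hA hsa, lt_of_lt_of_le hsb hb_le⟩
    rw [hunif, hae, hset, hseteq, Real.volume_Ico, hba]
    rw [ENNReal.ofReal_div_of_pos ht, div_eq_mul_inv, mul_comm]
  -- Case B: the interval wraps around
  · push_neg at hA
    have hseteq : (⋃ n : ℤ, Ico (x - t * n) (x' - t * n)) ∩ Ico 0 t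
        = Ico 0 b ∪ Ico (a + t) t := by
      ext s
      simp only [mem_inter_iff, mem_iUnion, mem_Ico, mem_union]
      constructor
      · rintro ⟨⟨n, h1, h2⟩, hs0, hst⟩
        have hn : n = n1 ∨ n = n1 - 1 := hforce s n hs0 hst h1 h2
        rcases hn with hn | hn
        · subst hn; exact Or.inl ⟨hs0, by simpa [hb_def] using h2⟩
        · subst hn
          refine Or.inr ⟨?_, hst⟩
          have hcast : ((n1 : ℝ) - 1) = ((n1 - 1 : ℤ) : ℝ) := by push_cast; ring
          have h1' : x - t * ((n1 : ℝ) - 1) ≤ s := by rw [hcast]; exact_mod_cast h1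
          simp only [ha_def]; nlinarith
      · rintro (⟨hs0, hsb⟩ | ⟨hsa, hst⟩)
        · exact ⟨⟨n1, by simp only [ha_def] at *; linarith, by simpa [hb_def] using hsb⟩,
            hs0, lt_of_lt_of_le hsb hb_le⟩
        · refine ⟨⟨n1 - 1, ?_, ?_⟩, by linarith, hst⟩
          · have hcast : ((n1 - 1 : ℤ) : ℝ) = (n1 : ℝ) - 1 := by push_cast; ring
            rw [hcast]
            simp only [ha_def] at hsa; nlinarith
          · have hcast : ((n1 - 1 : ℤ) : ℝ) = (n1 : ℝ) - 1 := by push_cast; ring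
            rw [hcast]
            simp only [hb_def] at hb_pos ⊢; nlinarith
    have hdisj : Disjoint (Ico (0:ℝ) b) (Ico (a + t) t) := by
      apply Set.disjoint_left.mpr
      rintro s ⟨hs0, hsb⟩ ⟨hsa, hst⟩
      have : b < a + t := by linarith [hlt, hba]
      linarith
    rw [hunif, hae, hset, hseteq,
      measure_union hdisj measurableSet_Ico, Real.volume_Ico, Real.volume_Ico]
    rw [← ENNReal.ofReal_add (by linarith) (by linarith)]
    have : (b - 0) + (t - (a + t)) = x' - x := by linarith
    rw [this, ENNReal.ofReal_div_of_pos ht, div_eq_mul_inv, mul_comm]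
end

section
/- Let λ = 1/2, let x ∈ [0,1], let s be uniform on [0,1], and define x̃ = (s + 1_{x > s})/2. Let ε be uniform on [-1/2,1/2]. Then x̃ has the same distribution as (x + ε)/2 + 1/4. -/
open MeasureTheory Set
open scoped ENNReal

lemma affineEmbedding (c : ℝ) : MeasurableEmbedding (fun s : ℝ => s / 2 + c) := by
  have : (fun s : ℝ => s / 2 + c) =
      (Homeomorph.trans (Homeomorph.mulRight₀ (1/2 : ℝ) (by norm_num))
        (Homeomorph.addRight c)) := by
    funext s; simp [Homeomorph.trans]; ring
  rw [this]
  exact (Homeomorph.trans (Homeomorph.mulRight₀ (1/2 : ℝ) (by norm_num))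
        (Homeomorph.addRight c)).measurableEmbedding

lemma map_affine_volume (c : ℝ) :
    Measure.map (fun s : ℝ => s / 2 + c) volume = (2 : ℝ≥0∞) • volume := by
  have h1 : (fun s : ℝ => s / 2 + c) = (fun y : ℝ => y + c) ∘ (fun s : ℝ => s * (1/2)) := by
    funext s; simp; ring
  rw [h1, ← Measure.map_map (measurable_add_const c) (measurable_mul_const _),
    Real.map_volume_mul_right (by norm_num : (1/2:ℝ) ≠ 0)]
  have : ENNReal.ofReal |((1:ℝ)/2)⁻¹| = 2 := by
    rw [abs_of_pos (by norm_num)]; norm_num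
  rw [Measure.map_smul, map_add_right_eq_self volume c, this]

lemma map_affine_restrict (c : ℝ) (T : Set ℝ) :
    Measure.map (fun s : ℝ => s / 2 + c)
      (volume.restrict ((fun s : ℝ => s / 2 + c) ⁻¹' T)) =
      (2 : ℝ≥0∞) • volume.restrict T := by
  rw [← (affineEmbedding c).restrict_map, map_affine_volume, Measure.restrict_smul]

/-- For `λ = 1/2`: the splitting-noise value `x̃ = (s + 1_{x>s})/2` with `s ~ U(0,1)` has the
same distribution as `(x + ε)/2 + 1/4` with `ε ~ U(-1/2, 1/2)`. -/
theorem ssn_additive_correspondence_half (x : ℝ) (hx : x ∈ Icc (0:ℝ) 1) :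
    (unif 0 1).map (fun s => (s + (if s < x then (1:ℝ) else 0)) / 2) =
      (unif (-(1/2)) (1/2)).map (fun e => (x + e) / 2 + 1/4) := by
  obtain ⟨hx0, hx1⟩ := hx
  have hmeas : Measurable (fun s : ℝ => (s + (if s < x then (1:ℝ) else 0)) / 2) := by
    apply Measurable.div_const
    exact measurable_id.add (Measurable.ite (measurableSet_Iio) measurable_const measurable_const)
  -- RHS
  have hRHS : (unif (-(1/2)) (1/2)).map (fun e => (x + e) / 2 + 1/4) =
      (2 : ℝ≥0∞) • volume.restrict (Icc (x/2) ((x+1)/2)) := by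
    have h1 : unif (-(1/2)) (1/2) = volume.restrict (Icc (-(1/2)) (1/2)) := by
      simp [unif]; norm_num
    have h2 : (fun e : ℝ => (x + e) / 2 + 1/4) = (fun e : ℝ => e / 2 + (x/2 + 1/4)) := by
      funext e; ring
    have h3 : (fun e : ℝ => e / 2 + (x/2 + 1/4)) ⁻¹' (Icc (x/2) ((x+1)/2)) =
        Icc (-(1/2)) (1/2) := by
      ext e; simp only [mem_preimage, mem_Icc]; constructor <;> intro h <;>
        constructor <;> linarith [h.1, h.2]
    rw [h1, h2, ← h3, map_affine_restrict]
  -- LHS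
  have hL1 : unif 0 1 = volume.restrict (Icc 0 1) := by simp [unif]
  have hsplit : volume.restrict (Icc (0:ℝ) 1) =
      volume.restrict (Ico 0 x) + volume.restrict (Icc x 1) := by
    rw [← Measure.restrict_union
      (disjoint_left.mpr fun a ha hb => absurd hb.1 (not_le.mpr ha.2)) measurableSet_Icc,
      Ico_union_Icc_eq_Icc hx0 hx1]
  have hA : Measure.map (fun s => (s + (if s < x then (1:ℝ) else 0)) / 2)
      (volume.restrict (Ico 0 x)) = (2 : ℝ≥0∞) • volume.restrict (Ico (1/2) ((x+1)/2)) := by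
    have hcongr : (fun s : ℝ => (s + (if s < x then (1:ℝ) else 0)) / 2)
        =ᵐ[volume.restrict (Ico 0 x)] (fun s : ℝ => s / 2 + 1/2) := by
      filter_upwards [ae_restrict_mem measurableSet_Ico] with s hs
      rw [if_pos hs.2]; ring
    rw [Measure.map_congr hcongr]
    have h3 : (fun s : ℝ => s / 2 + 1/2) ⁻¹' (Ico (1/2) ((x+1)/2)) = Ico 0 x := by
      ext s; simp only [mem_preimage, mem_Ico]; constructor <;> intro h <;>
        constructor <;> linarith [h.1, h.2]
    rw [← h3, map_affine_restrict]
  have hB : Measure.map (fun s => (s + (if s < x then (1:ℝ) else 0)) / 2)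
      (volume.restrict (Icc x 1)) = (2 : ℝ≥0∞) • volume.restrict (Icc (x/2) (1/2)) := by
    have hcongr : (fun s : ℝ => (s + (if s < x then (1:ℝ) else 0)) / 2)
        =ᵐ[volume.restrict (Icc x 1)] (fun s : ℝ => s / 2 + 0) := by
      filter_upwards [ae_restrict_mem measurableSet_Icc] with s hs
      rw [if_neg (not_lt.mpr hs.1)]; ring
    rw [Measure.map_congr hcongr]
    have h3 : (fun s : ℝ => s / 2 + 0) ⁻¹' (Icc (x/2) (1/2)) = Icc x 1 := by
      ext s; simp only [mem_preimage, mem_Icc]; constructor <;> intro h <;>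
        constructor <;> linarith [h.1, h.2]
    rw [← h3, map_affine_restrict]
  rw [hL1, hsplit, Measure.map_add _ _ hmeas, hA, hB, hRHS, ← smul_add,
    ← Measure.restrict_union₀ (by
      have : Ico (1/2 : ℝ) ((x+1)/2) ∩ Icc (x/2) (1/2) ⊆ {(1/2 : ℝ)} := fun a ha =>
        mem_singleton_iff.mpr (le_antisymm ha.2.2 ha.1.1)
      exact measure_mono_null this Real.volume_singleton) measurableSet_Icc.nullMeasurableSet]
  congr 1
  apply Measure.restrict_congr_set
  rw [ae_eq_set]
  constructor
  · refine measure_mono_null (fun a ha => (?_ : a ∈ (∅ : Set ℝ))) measure_empty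
    exfalso
    rcases ha.1 with h | h
    · exact ha.2 ⟨by linarith [h.1], le_of_lt h.2⟩
    · exact ha.2 ⟨h.1, by linarith [h.2]⟩
  · refine measure_mono_null (fun a ha => ?_)
      (Real.volume_singleton (a := ((x+1)/2 : ℝ)))
    by_contra hne
    rw [mem_singleton_iff] at hne
    have h1 := ha.1.1
    have h2 := ha.1.2
    have : ¬ (a ∈ Ico (1/2 : ℝ) ((x+1)/2) ∨ a ∈ Icc (x/2 : ℝ) (1/2)) := ha.2
    push_neg at this
    obtain ⟨hn1, hn2⟩ := this
    simp only [mem_Ico, mem_Icc, not_and, not_le] at hn1 hn2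
    rcases le_or_gt a (1/2 : ℝ) with h | h
    · exact absurd (hn2 h1) (not_lt.mpr h)
    · have h3 := hn1 (le_of_lt h)
      exact hne (le_antisymm h2 (not_lt.mp h3))
end

section
/- Let λ ≥ 1/2, x ∈ [0,1], s uniform on [0,2λ], and x̃ = (min(s,1) + 1_{x > s})/2. Then: P(x̃ = 1/2) ≥ (2λ-1)/(2λ); conditional on s < x, x̃ is uniform on [1/2, (x+1)/2]; and conditional on x ≤ s < 1, x̃ is uniform on [x/2, 1/2]. -/
open MeasureTheory Set ProbabilityTheory

lemma map_half_add_volume (c : ℝ) :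
    Measure.map (fun s : ℝ => s / 2 + c) volume = ENNReal.ofReal 2 • volume := by
  have h : (fun s : ℝ => s / 2 + c) = (fun y : ℝ => y + c) ∘ (fun s : ℝ => (2:ℝ)⁻¹ * s) := by
    funext s; simp [Function.comp]; ring
  rw [h, ← Measure.map_map (by fun_prop) (by fun_prop),
    Real.map_volume_mul_left (by norm_num : ((2:ℝ)⁻¹ : ℝ) ≠ 0)]
  rw [Measure.map_smul, map_add_right_eq_self]
  norm_num

lemma map_half_add_restrict (c a b : ℝ) :
    Measure.map (fun s : ℝ => s / 2 + c) (volume.restrict (Ico a b)) =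
      ENNReal.ofReal 2 • volume.restrict (Ico (a/2 + c) (b/2 + c)) := by
  have hf : Measurable (fun s : ℝ => s / 2 + c) := by fun_prop
  have hpre : (fun s : ℝ => s / 2 + c) ⁻¹' Ico (a/2 + c) (b/2 + c) = Ico a b := by
    ext t
    simp only [mem_preimage, mem_Ico]
    constructor <;> rintro ⟨h1, h2⟩ <;> constructor <;> linarith
  ext u hu
  rw [Measure.map_apply hf hu, Measure.restrict_apply (hf hu),
    Measure.smul_apply, Measure.restrict_apply hu]
  have : (fun s : ℝ => s / 2 + c) ⁻¹' u ∩ Ico a b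
      = (fun s : ℝ => s / 2 + c) ⁻¹' (u ∩ Ico (a/2 + c) (b/2 + c)) := by
    rw [preimage_inter, hpre]
  rw [this, ← Measure.map_apply hf (hu.inter measurableSet_Ico), map_half_add_volume,
    Measure.smul_apply]

lemma unif_self (a : ℝ) : unif a a = 0 := by
  unfold unif
  rw [Icc_self, Measure.restrict_eq_zero.mpr (by simp), smul_zero]

lemma cond_map_helper (L u v cc : ℝ) (hL : 0 < L) (huv : u < v)
    (t : Set ℝ) (ht : MeasurableSet t)
    (htI : t ∩ Icc 0 L = Ico u v)
    (f : ℝ → ℝ) (hf : Measurable f)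
    (hfe : ∀ s ∈ Ico u v, f s = s / 2 + cc) :
    ((unif 0 L)[|t]).map f = unif (u/2 + cc) (v/2 + cc) := by
  have hc0 : ENNReal.ofReal L ≠ 0 := by simp [hL]
  have hcT : ENNReal.ofReal L ≠ ⊤ := ENNReal.ofReal_ne_top
  have hvu : (0:ℝ) < v - u := by linarith
  have hr : (unif 0 L).restrict t
      = (ENNReal.ofReal (L - 0))⁻¹ • volume.restrict (Ico u v) := by
    unfold unif
    rw [Measure.restrict_smul, Measure.restrict_restrict ht, htI]
  have hμt : unif 0 L t = (ENNReal.ofReal (L - 0))⁻¹ * ENNReal.ofReal (v - u) := by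
    unfold unif
    rw [Measure.smul_apply, Measure.restrict_apply ht, htI, Real.volume_Ico, smul_eq_mul]
  have key : (unif 0 L)[|t] = (ENNReal.ofReal (v - u))⁻¹ • volume.restrict (Ico u v) := by
    rw [ProbabilityTheory.cond, hr, hμt, smul_smul]
    congr 1
    rw [sub_zero, ENNReal.mul_inv (Or.inl (ENNReal.inv_ne_zero.mpr hcT))
      (Or.inl (ENNReal.inv_ne_top.mpr hc0)), inv_inv]
    rw [mul_comm (ENNReal.ofReal L), mul_assoc, ENNReal.mul_inv_cancel hc0 hcT, mul_one]
  rw [key, Measure.map_smul]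
  have hcong : Measure.map f (volume.restrict (Ico u v))
      = Measure.map (fun s : ℝ => s / 2 + cc) (volume.restrict (Ico u v)) := by
    apply Measure.map_congr
    filter_upwards [ae_restrict_mem measurableSet_Ico] with s hs using hfe s hs
  rw [hcong, map_half_add_restrict, smul_smul]
  unfold unif
  rw [Measure.restrict_congr_set (Ico_ae_eq_Icc)]
  congr 1
  have h1 : v/2 + cc - (u/2 + cc) = (v - u) / 2 := by ring
  rw [h1, ENNReal.ofReal_div_of_pos (by norm_num : (0:ℝ) < 2),
    div_eq_mul_inv,
    ENNReal.mul_inv (Or.inl (by simp only [ne_eq, ENNReal.ofReal_eq_zero, not_le]; linarith)) (Or.inl ENNReal.ofReal_ne_top),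
    inv_inv]

/-- For `λ ≥ 1/2`, `x ∈ [0,1]`, `s ~ U(0,2λ)` and `x̃ = (min(s,1)+1_{x>s})/2`:
`P(x̃ = 1/2) ≥ (2λ-1)/(2λ)`; conditionally on `s < x`, `x̃` is uniform on `[1/2,(x+1)/2]`;
and conditionally on `x ≤ s < 1`, `x̃` is uniform on `[x/2, 1/2]`. -/
theorem ssn_marginal_structure (lam : ℝ) (hlam : 1/2 ≤ lam) (x : ℝ) (hx : x ∈ Icc (0:ℝ) 1) :
    unif 0 (2 * lam) {s : ℝ | (min s 1 + (if s < x then (1:ℝ) else 0)) / 2 = 1/2} ≥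
        ENNReal.ofReal ((2 * lam - 1) / (2 * lam)) ∧
    ((unif 0 (2 * lam))[|{s : ℝ | s < x}]).map
        (fun s => (min s 1 + (if s < x then (1:ℝ) else 0)) / 2) =
      unif (1/2) ((x + 1) / 2) ∧
    ((unif 0 (2 * lam))[|{s : ℝ | x ≤ s ∧ s < 1}]).map
        (fun s => (min s 1 + (if s < x then (1:ℝ) else 0)) / 2) =
      unif (x / 2) (1/2) := by
  obtain ⟨hx0, hx1⟩ := hx
  have hL1 : (1:ℝ) ≤ 2 * lam := by linarith
  have hL0 : (0:ℝ) < 2 * lam := by linarith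
  have hf : Measurable (fun s : ℝ => (min s 1 + (if s < x then (1:ℝ) else 0)) / 2) := by
    apply Measurable.div_const
    apply Measurable.add (by fun_prop)
    exact Measurable.ite (measurableSet_Iio) measurable_const measurable_const
  refine ⟨?_, ?_, ?_⟩
  · -- Part 1
    have hsub : Icc (1:ℝ) (2 * lam) ⊆
        {s : ℝ | (min s 1 + (if s < x then (1:ℝ) else 0)) / 2 = 1/2} := by
      intro s hs
      have h1s : (1:ℝ) ≤ s := hs.1
      have : ¬ s < x := by intro h; linarith
      simp only [mem_setOf_eq, if_neg this, min_eq_right h1s]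
      norm_num
    refine le_trans (le_of_eq ?_) (measure_mono hsub)
    unfold unif
    rw [Measure.smul_apply, Measure.restrict_apply measurableSet_Icc,
      inter_eq_left.mpr (Icc_subset_Icc (by linarith) le_rfl), Real.volume_Icc,
      smul_eq_mul, sub_zero, ENNReal.ofReal_div_of_pos hL0, div_eq_mul_inv,
      mul_comm]
  · -- Part 2
    rcases eq_or_lt_of_le hx0 with h0 | h0
    · -- x = 0 : both sides are zero
      have hcz : (unif 0 (2 * lam))[|{s : ℝ | s < x}] = 0 := by
        rw [ProbabilityTheory.cond]
        have : (unif 0 (2 * lam)).restrict {s : ℝ | s < x} = 0 := by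
          rw [Measure.restrict_eq_zero]
          unfold unif
          have hset : {s : ℝ | s < x} = Iio x := rfl
          rw [hset, Measure.smul_apply, Measure.restrict_apply measurableSet_Iio]
          have : Iio x ∩ Icc 0 (2 * lam) = ∅ := by
            ext s
            simp only [mem_inter_iff, mem_Iio, mem_Icc, mem_empty_iff_false, iff_false]
            rintro ⟨h1, h2, _⟩; rw [← h0] at h1; linarith
          rw [this, measure_empty, smul_zero]
        rw [this, smul_zero]
      rw [hcz, Measure.map_zero, ← h0]
      norm_num [unif_self]
    · have h := cond_map_helper (2 * lam) 0 x (1/2) hL0 h0 {s : ℝ | s < x}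
        measurableSet_Iio
        (by
          ext s
          simp only [mem_inter_iff, mem_setOf_eq, mem_Icc, mem_Ico]
          constructor
          · rintro ⟨h1, h2, _⟩; exact ⟨h2, h1⟩
          · rintro ⟨h1, h2⟩; exact ⟨h2, h1, by linarith⟩)
        _ hf
        (by
          intro s hs
          have hsx : s < x := hs.2
          have hs1 : s ≤ 1 := le_trans (le_of_lt hsx) hx1
          simp only [min_eq_left hs1, if_pos hsx]
          ring)
      convert h using 2 <;> ring
  · -- Part 3
    rcases eq_or_lt_of_le hx1 with h1 | h1
    · -- x = 1 : conditioning set is empty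
      have hcz : (unif 0 (2 * lam))[|{s : ℝ | x ≤ s ∧ s < 1}] = 0 := by
        rw [ProbabilityTheory.cond]
        have hes : {s : ℝ | x ≤ s ∧ s < 1} = ∅ := by
          ext s
          simp only [mem_setOf_eq, mem_empty_iff_false, iff_false]
          rintro ⟨ha, hb⟩; rw [h1] at ha; linarith
        rw [hes, Measure.restrict_empty, smul_zero]
      rw [hcz, Measure.map_zero, h1]
      norm_num [unif_self]
    · have h := cond_map_helper (2 * lam) x 1 0 hL0 h1 {s : ℝ | x ≤ s ∧ s < 1}
        ((measurableSet_Ici.inter measurableSet_Iio))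
        (by
          ext s
          simp only [mem_inter_iff, mem_setOf_eq, mem_Icc, mem_Ico]
          constructor
          · rintro ⟨⟨ha, hb⟩, _⟩; exact ⟨ha, hb⟩
          · rintro ⟨ha, hb⟩; exact ⟨⟨ha, hb⟩, by linarith, by linarith⟩)
        _ hf
        (by
          intro s hs
          have : ¬ s < x := not_lt.mpr hs.1
          simp only [min_eq_left (le_of_lt hs.2), if_neg this]
          ring)
      convert h using 2 <;> ring
end

section
/- Fix λ = 1/2 and d ≥ 1. Suppose S is a joint distribution on [0,1]^d with each coordinate marginally uniform on [0,1], and D is a joint distribution on [-1/2,1/2]^d with each coordinate marginally uniform on [-1/2,1/2], such that for every x ∈ [0,1]^d, the SSN output x̃ (with x̃ᵢ = (sᵢ + 1_{xᵢ>sᵢ})/2, s ~ S) has the same distribution as (x+ε)/2 + 𝟙/4 with ε ~ D. Then S is the product uniform distribution U^d(0,1) and D is the product uniform distribution U^d(-1/2,1/2). -/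
/-!
At `x = 0` the equivalence says that `S` is `D` translated by `𝟙/2`. Substituting this back, it
says that for every `x ∈ [0,1)^d` the vectors `s + x` and `s + 𝟙_{s < x}` (the representative of
`s` modulo `ℤ^d` in `[x, x + 𝟙)`) have the same law under `S`. Reduced modulo `ℤ^d`, the second is
just `s`, so the image of `S` on the torus `ℝ^d/ℤ^d` is translation invariant, hence it is the Haar
probability measure. As `S` lives on `[0,1)^d`, where reduction modulo `ℤ^d` is injective, `S` is
the product of uniform distributions, and then so is `D = S - 𝟙/2`.
-/

open MeasureTheory Set

lemma unif_eq_smul_restrict_of_ae_eq {a b : ℝ} {s : Set ℝ} (hs : s =ᵐ[volume] Icc a b) :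
    unif a b = (ENNReal.ofReal (b - a))⁻¹ • volume.restrict s := by
  rw [unif, Measure.restrict_congr_set hs]

instance (a b : ℝ) : IsFiniteMeasure (unif a b) where
  measure_univ_lt_top := by
    simp only [unif, Measure.smul_apply, Measure.restrict_apply_univ, Real.volume_Icc, smul_eq_mul]
    exact (ENNReal.inv_mul_le_one _).trans_lt ENNReal.one_lt_top

lemma unif_zero_one : unif 0 1 = volume.restrict (Ioc 0 1) := by
  simp [unif_eq_smul_restrict_of_ae_eq Ioc_ae_eq_Icc]

lemma ae_mem_Ico_unif (a b : ℝ) : ∀ᵐ t ∂unif a b, t ∈ Ico a b := by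
  rw [unif_eq_smul_restrict_of_ae_eq Ico_ae_eq_Icc]
  exact Measure.ae_smul_measure (ae_restrict_mem measurableSet_Ico) _

lemma map_sub_const_unif (a b c : ℝ) : (unif a b).map (· - c) = unif (a - c) (b - c) := by
  have h := ((measurePreserving_sub_right volume c).restrict_preimage
    (measurableSet_Icc (a := a - c) (b := b - c))).map_eq
  rw [preimage_sub_const_Icc, sub_add_cancel, sub_add_cancel] at h
  rw [unif, unif, Measure.map_smul, h, sub_sub_sub_cancel_right]

lemma MeasureTheory.Measure.isAddLeftInvariant_eq_of_isProbabilityMeasure {G : Type*}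
    [AddGroup G] [TopologicalSpace G] [IsTopologicalAddGroup G] [CompactSpace G]
    [MeasurableSpace G] [BorelSpace G] (μ' μ : Measure G) [μ.IsAddHaarMeasure]
    [IsProbabilityMeasure μ] [μ'.IsAddLeftInvariant] [IsProbabilityMeasure μ'] : μ' = μ := by
  have h := isAddInvariant_eq_smul_of_compactSpace μ' μ
  have h_univ := congrArg (fun ν : Measure G => ν univ) h
  simp only [measure_univ, Measure.smul_apply, ENNReal.smul_one, ENNReal.one_eq_coe] at h_univ
  rw [h, ← h_univ, one_smul]

instance : IsProbabilityMeasure (volume : Measure UnitAddCircle) := ⟨UnitAddCircle.measure_univ⟩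

section Torus

variable {ι : Type*}

noncomputable def addOneBelow (x s : ι → ℝ) : ι → ℝ := fun i => s i + if s i < x i then 1 else 0

@[fun_prop]
lemma measurable_addOneBelow (x : ι → ℝ) : Measurable (addOneBelow x) :=
  measurable_pi_lambda _ fun i => (measurable_pi_apply i).add <|
    Measurable.ite (measurableSet_lt (measurable_pi_apply i) measurable_const)
      measurable_const measurable_const

lemma addOneBelow_of_le {x s : ι → ℝ} (h : x ≤ s) : addOneBelow x s = s := by
  ext i
  simp [addOneBelow, not_lt.2 (h i)]

namespace UnitAddTorus

def ofReal (s : ι → ℝ) : UnitAddTorus ι := fun i => (s i : UnitAddCircle)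

noncomputable def liftIco (z : UnitAddTorus ι) : ι → ℝ :=
  fun i => (AddCircle.equivIco 1 0 (z i) : ℝ)

@[fun_prop]
lemma measurable_ofReal : Measurable (ofReal : (ι → ℝ) → UnitAddTorus ι) :=
  measurable_pi_lambda _ fun i => AddCircle.measurable_mk'.comp (measurable_pi_apply i)

@[fun_prop]
lemma measurable_liftIco : Measurable (liftIco : UnitAddTorus ι → ι → ℝ) :=
  measurable_pi_lambda _ fun i =>
    measurable_subtype_coe.comp ((AddCircle.measurableEquivIco 1 0).measurable.comp
      (measurable_pi_apply i))

lemma ofReal_add (x s : ι → ℝ) : ofReal (x + s) = ofReal x + ofReal s := by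
  ext i
  simp [ofReal]

lemma ofReal_addOneBelow (x s : ι → ℝ) : ofReal (addOneBelow x s) = ofReal s := by
  ext i
  simp only [ofReal, addOneBelow]
  split_ifs <;> simp

lemma ofReal_liftIco (z : UnitAddTorus ι) : ofReal (liftIco z) = z := by
  ext i
  exact AddCircle.coe_equivIco (p := (1 : ℝ))

lemma liftIco_mem (z : UnitAddTorus ι) (i : ι) : liftIco z i ∈ Ico 0 1 := by
  have h := (AddCircle.equivIco (1 : ℝ) 0 (z i)).2
  simp only [zero_add] at h
  exact h

lemma liftIco_ofReal {s : ι → ℝ} (hs : ∀ i, s i ∈ Ico 0 1) : liftIco (ofReal s) = s := by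
  ext i
  exact AddCircle.equivIco_coe_of_mem (p := (1 : ℝ)) (a := 0) (by simpa using hs i)

lemma map_liftIco_map_ofReal {μ : Measure (ι → ℝ)} (hμ : ∀ᵐ s ∂μ, ∀ i, s i ∈ Ico 0 1) :
    (μ.map ofReal).map liftIco = μ := by
  rw [Measure.map_map measurable_liftIco measurable_ofReal]
  conv_rhs => rw [← Measure.map_id (μ := μ)]
  exact Measure.map_congr (hμ.mono fun s hs => liftIco_ofReal hs)

lemma eq_of_map_ofReal_eq {μ ν : Measure (ι → ℝ)} (hμ : ∀ᵐ s ∂μ, ∀ i, s i ∈ Ico 0 1)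
    (hν : ∀ᵐ s ∂ν, ∀ i, s i ∈ Ico 0 1) (h : μ.map ofReal = ν.map ofReal) : μ = ν := by
  rw [← map_liftIco_map_ofReal hμ, h, map_liftIco_map_ofReal hν]

lemma isAddLeftInvariant_map_ofReal {μ : Measure (ι → ℝ)}
    (h : ∀ x : ι → ℝ, (∀ i, x i ∈ Ico 0 1) → μ.map (addOneBelow x) = μ.map (x + ·)) :
    (μ.map ofReal).IsAddLeftInvariant := by
  refine ⟨fun z => ?_⟩
  calc (μ.map ofReal).map (z + ·)
      = (μ.map (liftIco z + ·)).map ofReal := by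
        rw [Measure.map_map (by fun_prop) measurable_ofReal,
          Measure.map_map measurable_ofReal (by fun_prop)]
        congr 1
        ext s : 1
        simp [ofReal_add, ofReal_liftIco]
    _ = (μ.map (addOneBelow (liftIco z))).map ofReal := by rw [h _ (liftIco_mem z)]
    _ = μ.map ofReal := by
        rw [Measure.map_map measurable_ofReal (by fun_prop)]
        simp [Function.comp_def, ofReal_addOneBelow]

lemma map_ofReal_pi [Fintype ι] :
    (Measure.pi fun _ : ι => volume.restrict (Ioc (0 : ℝ) 1)).map ofReal = volume := by
  have h := (measurePreserving_pi _ _ fun _ : ι => UnitAddCircle.measurePreserving_mk 0).map_eq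
  rw [zero_add] at h
  exact h

end UnitAddTorus

end Torus

section Equivalence

variable {ι : Type*} {S D : Measure (ι → ℝ)}

lemma map_addOneBelow_of_map_half_eq (x : ι → ℝ)
    (h : S.map (fun s i => addOneBelow x s i / 2) = D.map (fun e i => (x i + e i) / 2 + 1 / 4)) :
    S.map (addOneBelow x) = D.map (fun e i => x i + e i + 1 / 2) := by
  have h2 := congrArg (Measure.map fun y i => 2 * y i) h
  rw [Measure.map_map (by fun_prop) (by fun_prop), Measure.map_map (by fun_prop) (by fun_prop)]
    at h2
  convert h2 using 2 <;> ext <;> simp only [addOneBelow, Function.comp_apply] <;> ring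

lemma map_add_add_half_eq_map_add (hSD : S = D.map (fun e i => e i + 1 / 2)) (x : ι → ℝ) :
    D.map (fun e i => x i + e i + 1 / 2) = S.map (x + ·) := by
  rw [hSD, Measure.map_map (by fun_prop) (by fun_prop)]
  congr 1
  ext e i
  simp only [Function.comp_apply, Pi.add_apply]
  ring

lemma eq_map_sub_half_of_eq_map_add_half (hSD : S = D.map (fun e i => e i + 1 / 2)) :
    D = S.map (fun s i => s i - 1 / 2) := by
  rw [hSD, Measure.map_map (by fun_prop) (by fun_prop)]
  simp [Function.comp_def, Measure.map_id']

end Equivalence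

theorem equivalent_joint_distributions_unique_general (d : ℕ)
    (S : Measure (Fin d → ℝ)) [IsProbabilityMeasure S]
    (D : Measure (Fin d → ℝ))
    (hSmarg : ∀ i, S.map (fun s => s i) = unif 0 1)
    (hequiv : ∀ x : Fin d → ℝ, (∀ i, x i ∈ Icc (0:ℝ) 1) →
      S.map (fun s => fun i => (s i + (if s i < x i then (1:ℝ) else 0)) / 2) =
        D.map (fun e => fun i => (x i + e i) / 2 + 1/4)) :
    S = Measure.pi (fun _ : Fin d => unif 0 1) ∧
      D = Measure.pi (fun _ : Fin d => unif (-(1/2)) (1/2)) := by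
  have hS : ∀ᵐ s ∂S, ∀ i, s i ∈ Ico 0 1 := ae_all_iff.2 fun i =>
    ae_of_ae_map (measurable_pi_apply i).aemeasurable <| (hSmarg i).symm ▸ ae_mem_Ico_unif 0 1
  have hU : ∀ᵐ s ∂Measure.pi (fun _ : Fin d => unif 0 1), ∀ i, s i ∈ Ico 0 1 :=
    ae_all_iff.2 fun _ => Measure.tendsto_eval_ae_ae.eventually (ae_mem_Ico_unif 0 1)
  have hequiv' x hx := map_addOneBelow_of_map_half_eq x (hequiv x hx)
  have hSD : S = D.map (fun e i => e i + 1 / 2) := by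
    have hid : S.map (addOneBelow 0) = S := by
      conv_rhs => rw [← Measure.map_id (μ := S)]
      exact Measure.map_congr (hS.mono fun s hs => addOneBelow_of_le fun i => (hs i).1)
    simpa [hid] using hequiv' 0 fun _ => ⟨le_rfl, zero_le_one⟩
  have : (S.map UnitAddTorus.ofReal).IsAddLeftInvariant :=
    UnitAddTorus.isAddLeftInvariant_map_ofReal fun x hx =>
      (hequiv' x fun i => Ico_subset_Icc_self (hx i)).trans (map_add_add_half_eq_map_add hSD x)
  have : IsProbabilityMeasure (S.map UnitAddTorus.ofReal) :=
    Measure.isProbabilityMeasure_map (by fun_prop)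
  have hSpi : S = Measure.pi (fun _ : Fin d => unif 0 1) := by
    refine UnitAddTorus.eq_of_map_ofReal_eq hS hU ?_
    rw [Measure.isAddLeftInvariant_eq_of_isProbabilityMeasure (S.map UnitAddTorus.ofReal) volume,
      unif_zero_one, UnitAddTorus.map_ofReal_pi]
  refine ⟨hSpi, ?_⟩
  rw [eq_map_sub_half_of_eq_map_add_half hSD, hSpi,
    Measure.pi_map_pi (f := fun _ t => t - 1 / 2) (fun _ => by fun_prop), map_sub_const_unif]
  norm_num

/-- At `λ = 1/2`, the only pair of joint noise distributions `(S, D)` — with uniform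
marginals on `[0,1]` resp. `[-1/2,1/2]` — for which the SSN output `x̃` always has the same
distribution as `(x+ε)/2 + 𝟙/4`, is the pair of fully independent product distributions. -/
theorem equivalent_joint_distributions_unique (d : ℕ) (hd : 1 ≤ d)
    (S : Measure (Fin d → ℝ)) [IsProbabilityMeasure S]
    (D : Measure (Fin d → ℝ)) [IsProbabilityMeasure D]
    (hSmarg : ∀ i, S.map (fun s => s i) = unif 0 1)
    (hDmarg : ∀ i, D.map (fun e => e i) = unif (-(1/2)) (1/2))
    (hequiv : ∀ x : Fin d → ℝ, (∀ i, x i ∈ Icc (0:ℝ) 1) →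
      S.map (fun s => fun i => (s i + (if s i < x i then (1:ℝ) else 0)) / 2) =
        D.map (fun e => fun i => (x i + e i) / 2 + 1/4)) :
    S = Measure.pi (fun _ : Fin d => unif 0 1) ∧
      D = Measure.pi (fun _ : Fin d => unif (-(1/2)) (1/2)) :=
  equivalent_joint_distributions_unique_general d S D hSmarg hequiv
end
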